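/- arXiv:2506.03784 — 5 statements merged into one kernel-verified Lean document; each statement's English description precedes it below -/
import Mathlib

section
/- Let z, w be M-dimensional square-integrable random vectors, standardized componentwise, with cross-covariance matrix A = Σ_{zw} and covariance matrix B = Σ_{zz}, both full rank. Then the sum of the singular values of A satisfies Σ_i σ_i(A) ≥ M - M·sqrt(M·Σ_{l=1}^M Var[z_l - w_l]). -/
open MeasureTheory ProbabilityTheory Matrix

/-- Covariance of two real random variables. -/
noncomputable def cov {Ω : Type*} [MeasurableSpace Ω] (μ : Measure Ω)
    (X Y : Ω → ℝ) : ℝ :=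
  ∫ ω, (X ω - ∫ a, X a ∂μ) * (Y ω - ∫ a, Y a ∂μ) ∂μ

/-- The singular values of a real square matrix:
square roots of the eigenvalues of `Aᴴ * A`. -/
noncomputable def sval {M : ℕ} (A : Matrix (Fin M) (Fin M) ℝ) (i : Fin M) : ℝ :=
  Real.sqrt ((Matrix.isHermitian_conjTranspose_mul_self A).eigenvalues i)

/-!
The diagonal entries of `A` are `cov(z_l, w_l) = 1 - Var(z_l - w_l) / 2`, so `tr A = M - S / 2`
where `S = ∑ Var(z_l - w_l)` lies in `[0, 4M]` (parallelogram law), and such `S` satisfies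
`S / 2 ≤ M √(M S)`. It remains to see `tr A ≤ ∑ σ_i(A)`: in the polar decomposition `A = U P`,
with `U` orthogonal and `P = √(AᵀA)`, write `P = Q Q` with `Q = √P` symmetric; then
`tr (U P) = tr (Q U Q) = ∑_i q_i ⬝ U q_i ≤ ∑_i q_i ⬝ q_i = tr P` over the rows `q_i` of `Q`,
and `tr P` is the sum of the singular values.
-/

open scoped MatrixOrder

namespace Matrix

variable {n : Type*} [Fintype n] [DecidableEq n]

lemma dotProduct_mulVec_le_dotProduct_self {U : Matrix n n ℝ} (hU : Uᵀ * U = 1) (x : n → ℝ) :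
    x ⬝ᵥ (U *ᵥ x) ≤ x ⬝ᵥ x := by
  have hnorm : (U *ᵥ x) ⬝ᵥ (U *ᵥ x) = x ⬝ᵥ x := by
    rw [dotProduct_mulVec, ← mulVec_transpose, mulVec_mulVec, hU, one_mulVec]
  have hdiff : 0 ≤ (x - U *ᵥ x) ⬝ᵥ (x - U *ᵥ x) := by
    simpa using dotProduct_self_star_nonneg (x - U *ᵥ x)
  simp only [sub_dotProduct, dotProduct_sub, hnorm, dotProduct_comm (U *ᵥ x) x] at hdiff
  linarith

lemma trace_mul_le_trace_of_posSemidef {U P : Matrix n n ℝ} (hU : Uᵀ * U = 1)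
    (hP : P.PosSemidef) : (U * P).trace ≤ P.trace := by
  set Q := CFC.sqrt P
  have hQQ : Q * Q = P := CFC.sqrt_mul_sqrt_self P hP.nonneg
  have hQsymm : Qᵀ = Q := by
    rw [← conjTranspose_eq_transpose_of_trivial]; exact (CFC.sqrt_nonneg P).posSemidef.1
  calc (U * P).trace = (Q * U * Q).trace := by
        rw [← hQQ, ← Matrix.mul_assoc, trace_mul_comm, Matrix.mul_assoc]
  _ = ∑ i, Q i ⬝ᵥ (U *ᵥ Q i) := by
        simp only [trace, diag, mul_mul_apply, hQsymm]
  _ ≤ ∑ i, Q i ⬝ᵥ Q i := Finset.sum_le_sum fun i _ => dotProduct_mulVec_le_dotProduct_self hU _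
  _ = P.trace := by
        rw [← hQQ]
        refine Finset.sum_congr rfl fun i _ => ?_
        rw [diag_apply, mul_apply']
        congr 1
        ext j
        exact (congrFun (congrFun hQsymm i) j).symm

lemma exists_transpose_mul_self_eq_one_and_eq_mul_sqrt {A : Matrix n n ℝ} (hA : IsUnit A.det) :
    ∃ U : Matrix n n ℝ, Uᵀ * U = 1 ∧ A = U * CFC.sqrt (Aᴴ * A) := by
  set P := CFC.sqrt (Aᴴ * A)
  have hAA : (Aᴴ * A).PosSemidef := posSemidef_conjTranspose_mul_self A
  have hPP : P * P = Aᵀ * A := by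
    rw [CFC.sqrt_mul_sqrt_self _ hAA.nonneg, conjTranspose_eq_transpose_of_trivial]
  have hPsymm : Pᵀ = P := by
    rw [← conjTranspose_eq_transpose_of_trivial]; exact (CFC.sqrt_nonneg _).posSemidef.1
  have hP : IsUnit P.det := by
    have : IsUnit (P.det * P.det) := by
      rw [← det_mul, hPP, det_mul, det_transpose]; exact hA.mul hA
    exact isUnit_of_mul_isUnit_left this
  refine ⟨A * P⁻¹, ?_, by rw [Matrix.mul_assoc, nonsing_inv_mul _ hP, Matrix.mul_one]⟩
  calc (A * P⁻¹)ᵀ * (A * P⁻¹) = P⁻¹ * (P * P) * P⁻¹ := by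
        rw [transpose_mul, transpose_nonsing_inv, hPsymm, hPP]; noncomm_ring
  _ = 1 := by
        rw [← Matrix.mul_assoc, nonsing_inv_mul _ hP, Matrix.one_mul, mul_nonsing_inv _ hP]

lemma trace_le_trace_sqrt_conjTranspose_mul_self {A : Matrix n n ℝ} (hA : IsUnit A.det) :
    A.trace ≤ (CFC.sqrt (Aᴴ * A)).trace := by
  obtain ⟨U, hU, hAU⟩ := exists_transpose_mul_self_eq_one_and_eq_mul_sqrt hA
  conv_lhs => rw [hAU]
  exact trace_mul_le_trace_of_posSemidef hU (CFC.sqrt_nonneg _).posSemidef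

end Matrix

lemma trace_sqrt_conjTranspose_mul_self_eq_sum_sval {M : ℕ} (A : Matrix (Fin M) (Fin M) ℝ) :
    (CFC.sqrt (Aᴴ * A)).trace = ∑ i, sval A i := by
  have hAA : (Aᴴ * A).PosSemidef := posSemidef_conjTranspose_mul_self A
  rw [CFC.sqrt_eq_cfc, cfc_nnreal_eq_real _ _ hAA.nonneg, hAA.1.cfc_eq, IsHermitian.cfc,
    Unitary.conjStarAlgAut_apply, trace_mul_cycle, Unitary.coe_star_mul_self, Matrix.one_mul,
    trace_diagonal]
  refine Finset.sum_congr rfl fun i _ => ?_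
  simp only [Function.comp_apply, RCLike.ofReal_real_eq_id, id, Real.coe_sqrt,
    Real.coe_toNNReal _ (hAA.eigenvalues_nonneg i)]
  rfl

lemma trace_le_sum_sval {M : ℕ} {A : Matrix (Fin M) (Fin M) ℝ} (hA : IsUnit A.det) :
    A.trace ≤ ∑ i, sval A i :=
  trace_sqrt_conjTranspose_mul_self_eq_sum_sval A ▸ trace_le_trace_sqrt_conjTranspose_mul_self hA

namespace ProbabilityTheory

variable {Ω : Type*} [MeasurableSpace Ω] {μ : Measure Ω} [IsFiniteMeasure μ] {X Y : Ω → ℝ}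

lemma variance_sub_add_variance_add (hX : MemLp X 2 μ) (hY : MemLp Y 2 μ) :
    Var[X - Y; μ] + Var[X + Y; μ] = 2 * Var[X; μ] + 2 * Var[Y; μ] := by
  rw [variance_sub hX hY, variance_add hX hY]
  ring

lemma covariance_eq_one_sub_variance_sub_div_two (hX : MemLp X 2 μ) (hY : MemLp Y 2 μ)
    (hXv : Var[X; μ] = 1) (hYv : Var[Y; μ] = 1) :
    cov[X, Y; μ] = 1 - Var[X - Y; μ] / 2 := by
  rw [variance_sub hX hY, hXv, hYv]
  ring

lemma variance_sub_le_four (hX : MemLp X 2 μ) (hY : MemLp Y 2 μ)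
    (hXv : Var[X; μ] = 1) (hYv : Var[Y; μ] = 1) : Var[X - Y; μ] ≤ 4 := by
  linarith [variance_sub_add_variance_add hX hY, variance_nonneg (X + Y) μ]

end ProbabilityTheory

lemma div_two_le_mul_sqrt_mul {S : ℝ} (M : ℕ) (hS0 : 0 ≤ S) (hS : S ≤ 4 * M) :
    S / 2 ≤ M * √(M * S) := by
  rcases M.eq_zero_or_pos with rfl | hM
  · simp only [CharP.cast_eq_zero, mul_zero] at hS ⊢
    linarith
  have hM1 : (1 : ℝ) ≤ M := by exact_mod_cast hM
  calc S / 2 ≤ √(M * S) := Real.le_sqrt_of_sq_le (by nlinarith)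
  _ ≤ M * √(M * S) := le_mul_of_one_le_left (Real.sqrt_nonneg _) hM1

theorem sum_sval_cross_cov_lower_bound_general
    {Ω : Type*} [MeasurableSpace Ω] (μ : Measure Ω) [IsProbabilityMeasure μ]
    {M : ℕ}
    (z w : Fin M → Ω → ℝ)
    (hz : ∀ i, MemLp (z i) 2 μ) (hw : ∀ i, MemLp (w i) 2 μ)
    (hzv : ∀ i, variance (z i) μ = 1)
    (hwv : ∀ i, variance (w i) μ = 1)
    (A : Matrix (Fin M) (Fin M) ℝ)
    (hA : ∀ i j, A i j = cov μ (z i) (w j))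
    (hAdet : IsUnit A.det) :
    (M : ℝ) - M * Real.sqrt (M * ∑ l, variance (z l - w l) μ) ≤ ∑ i, sval A i := by
  set S := ∑ l, variance (z l - w l) μ
  have htrace : A.trace = M - S / 2 := by
    -- `cov μ X Y` unfolds to Mathlib's `cov[X, Y; μ]`.
    calc A.trace = ∑ l, cov[z l, w l; μ] := Finset.sum_congr rfl fun l _ => hA l l
    _ = ∑ l, (1 - variance (z l - w l) μ / 2) := Finset.sum_congr rfl fun l _ =>
          covariance_eq_one_sub_variance_sub_div_two (hz l) (hw l) (hzv l) (hwv l)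
    _ = M - S / 2 := by simp [S, Finset.sum_sub_distrib, Finset.sum_div]
  have hS : S ≤ 4 * M := by
    simpa [mul_comm] using Finset.sum_le_sum fun l (_ : l ∈ Finset.univ) =>
      variance_sub_le_four (hz l) (hw l) (hzv l) (hwv l)
  calc (M : ℝ) - M * √(M * S) ≤ M - S / 2 := by
        linarith [div_two_le_mul_sqrt_mul M (Finset.sum_nonneg fun l _ => variance_nonneg _ μ) hS]
  _ = A.trace := htrace.symm
  _ ≤ ∑ i, sval A i := trace_le_sum_sval hAdet

/-- Lower bound on the sum of singular values of the cross-covariance matrix of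
two standardized random vectors. -/
theorem sum_sval_cross_cov_lower_bound
    {Ω : Type*} [MeasurableSpace Ω] (μ : Measure Ω) [IsProbabilityMeasure μ]
    {M : ℕ}
    (z w : Fin M → Ω → ℝ)
    (hz : ∀ i, MemLp (z i) 2 μ) (hw : ∀ i, MemLp (w i) 2 μ)
    (hzm : ∀ i, (∫ ω, z i ω ∂μ) = 0) (hzv : ∀ i, variance (z i) μ = 1)
    (hwm : ∀ i, (∫ ω, w i ω ∂μ) = 0) (hwv : ∀ i, variance (w i) μ = 1)
    (A B : Matrix (Fin M) (Fin M) ℝ)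
    (hA : ∀ i j, A i j = cov μ (z i) (w j))
    (hB : ∀ i j, B i j = cov μ (z i) (z j))
    (hAdet : IsUnit A.det) (hBdet : IsUnit B.det) :
    (M : ℝ) - M * Real.sqrt (M * ∑ l, variance (z l - w l) μ) ≤ ∑ i, sval A i :=
  sum_sval_cross_cov_lower_bound_general μ z w hz hw hzv hwv A hA hAdet
end

section
/- Linear identifiability: let (f, g) and (f', g') be two pairs of maps X → ℝ^M, Y → ℝ^M defining softmax conditional distributions p_{f,g} and p_{f',g'}, and suppose there exist y₀, y₁, …, y_M ∈ Y such that the vectors g(y_i) - g(y₀), i = 1..M, are linearly independent, and x₀, x₁, …, x_M ∈ X such that the vectors f(x_i) - f(x₀) are linearly independent. If p_{f,g}(y|x) = p_{f',g'}(y|x) for all x ∈ X and y ∈ Y, then with L (resp. L') the matrix with columns g(y_i) - g(y₀) (resp. g'(y_i) - g'(y₀)) and A := L^{-T} L'^{T}, A is invertible, f(x) = A f'(x) for all x, and g(y) - g(y₀) = A^{-T}(g'(y) - g'(y₀)) for all y. -/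
/-!
Dividing `p(y|x)` by `p(y₀|x)` cancels the partition function, so equal softmax models satisfy
`⟨f x, g y - g y₀⟩ = ⟨f' x, g' y - g' y₀⟩` for all `x, y`. Everything else is linear algebra on
this pairing identity: testing it against the basis `g (ys j) - g y₀` gives `Lᵀ f x = L'ᵀ f' x`,
i.e. `f = A f'`; the basis `f (xs j) - f x₀` then forces `A` to be invertible, and testing
against the (hence also independent) vectors `f' (xs j) - f' x₀` gives `Aᵀ (g y - g y₀) = g' y - g' y₀`.
-/

open Matrix

/-- The softmax conditional model `p_{f,g}(y|x)`. -/
noncomputable def softmax {X Y : Type*} [Fintype Y] {M : ℕ}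
    (f : X → Fin M → ℝ) (g : Y → Fin M → ℝ) (x : X) (y : Y) : ℝ :=
  Real.exp (∑ i, f x i * g y i) / ∑ y' : Y, Real.exp (∑ i, f x i * g y' i)

theorem softmax_div_softmax {X Y : Type*} [Fintype Y] {M : ℕ}
    (f : X → Fin M → ℝ) (g : Y → Fin M → ℝ) (x : X) (y y₀ : Y) :
    softmax f g x y / softmax f g x y₀ = Real.exp (f x ⬝ᵥ (g y - g y₀)) := by
  have : Nonempty Y := ⟨y₀⟩
  have hZ : ∑ y' : Y, Real.exp (∑ i, f x i * g y' i) ≠ 0 :=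
    (Finset.sum_pos (fun _ _ => Real.exp_pos _) Finset.univ_nonempty).ne'
  rw [softmax, softmax, div_div_div_cancel_right₀ hZ, ← Real.exp_sub, dotProduct_sub]
  rfl

theorem dotProduct_sub_eq_of_softmax_eq {X Y : Type*} [Fintype Y] {M : ℕ}
    {f f' : X → Fin M → ℝ} {g g' : Y → Fin M → ℝ}
    (heq : ∀ x y, softmax f g x y = softmax f' g' x y) (x : X) (y y₀ : Y) :
    f x ⬝ᵥ (g y - g y₀) = f' x ⬝ᵥ (g' y - g' y₀) := by
  apply Real.exp_injective
  rw [← softmax_div_softmax, ← softmax_div_softmax, heq, heq]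

section LinearAlgebra

variable {K n X Y : Type*} [Field K] [Fintype n] [DecidableEq n]

theorem eq_of_forall_dotProduct_eq {w : n → n → K} (hw : LinearIndependent K w) {a b : n → K}
    (h : ∀ i, w i ⬝ᵥ a = w i ⬝ᵥ b) : a = b :=
  mulVec_injective_iff_isUnit.mpr (linearIndependent_rows_iff_isUnit.mp hw) (funext h)

theorem eq_inv_mul_mulVec_of_dotProduct_eq {u u' : X → n → K} {v v' : Y → n → K}
    (h : ∀ x y, u x ⬝ᵥ v y = u' x ⬝ᵥ v' y) {ys : n → Y} (hv : LinearIndependent K (v ∘ ys))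
    (x : X) : u x = ((of (v ∘ ys))⁻¹ * of (v' ∘ ys)) *ᵥ u' x := by
  have hV : IsUnit (of (v ∘ ys)).det :=
    (isUnit_iff_isUnit_det _).mp (linearIndependent_rows_iff_isUnit.mp hv)
  have hmul : of (v ∘ ys) *ᵥ u x = of (v' ∘ ys) *ᵥ u' x := by
    funext i
    simp only [mulVec, of_apply, Function.comp_apply]
    rw [dotProduct_comm, h, dotProduct_comm]
  rw [← mulVec_mulVec, ← hmul, mulVec_mulVec, nonsing_inv_mul _ hV, one_mulVec]

theorem isUnit_and_linearIndependent_of_eq_mulVec {u u' : X → n → K} {A : Matrix n n K}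
    (hA : ∀ x, u x = A *ᵥ u' x) {x₀ : X} {xs : n → X}
    (hu : LinearIndependent K (fun i => u (xs i) - u x₀)) :
    IsUnit A ∧ LinearIndependent K (fun i => u' (xs i) - u' x₀) := by
  have hrows : (fun i => u (xs i) - u x₀) = fun i => A *ᵥ (u' (xs i) - u' x₀) := by
    simp only [hA, mulVec_sub]
  have hfac : of (fun i => u (xs i) - u x₀) = of (fun i => u' (xs i) - u' x₀) * Aᵀ := by
    ext i j
    rw [hrows, of_apply, mul_apply]
    simp only [mulVec, dotProduct, of_apply, transpose_apply, mul_comm]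
  have hF : IsUnit (of fun i => u (xs i) - u x₀) := linearIndependent_rows_iff_isUnit.mp hu
  refine ⟨(isUnit_transpose A).mp (isUnit_of_mul_isUnit_right (hfac ▸ hF)), ?_⟩
  rw [hrows] at hu
  exact LinearIndependent.of_comp A.mulVecLin hu

theorem transpose_mulVec_eq_of_dotProduct_eq {u u' : X → n → K} {v v' : Y → n → K}
    (h : ∀ x y, u x ⬝ᵥ v y = u' x ⬝ᵥ v' y) {A : Matrix n n K} (hA : ∀ x, u x = A *ᵥ u' x)
    {x₀ : X} {xs : n → X} (hu' : LinearIndependent K (fun i => u' (xs i) - u' x₀)) (y : Y) :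
    Aᵀ *ᵥ v y = v' y := by
  have hpair : ∀ x, u' x ⬝ᵥ Aᵀ *ᵥ v y = u' x ⬝ᵥ v' y := fun x => by
    rw [dotProduct_mulVec, vecMul_transpose, ← hA, h]
  refine (eq_of_forall_dotProduct_eq hu' fun i => ?_).symm
  rw [sub_dotProduct, sub_dotProduct, hpair, hpair]

end LinearAlgebra

/-- Linear identifiability of softmax models under the diversity condition. -/
theorem linear_identifiability {X Y : Type*} [Fintype Y] {M : ℕ}
    (f f' : X → Fin M → ℝ) (g g' : Y → Fin M → ℝ)
    (y₀ : Y) (ys : Fin M → Y) (x₀ : X) (xs : Fin M → X)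
    (hdivg : LinearIndependent ℝ (fun i => g (ys i) - g y₀))
    (hdivf : LinearIndependent ℝ (fun i => f (xs i) - f x₀))
    (heq : ∀ x y, softmax f g x y = softmax f' g' x y)
    (L L' A : Matrix (Fin M) (Fin M) ℝ)
    (hL : ∀ i j, L i j = g (ys j) i - g y₀ i)
    (hL' : ∀ i j, L' i j = g' (ys j) i - g' y₀ i)
    (hA : A = (Lᵀ)⁻¹ * L'ᵀ) :
    IsUnit A.det ∧
    (∀ x, f x = A.mulVec (f' x)) ∧
    (∀ y, (fun i => g y i - g y₀ i) = (Aᵀ)⁻¹.mulVec (fun i => g' y i - g' y₀ i)) := by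
  have hpair : ∀ x y, f x ⬝ᵥ (g y - g y₀) = f' x ⬝ᵥ (g' y - g' y₀) :=
    fun x y => dotProduct_sub_eq_of_softmax_eq heq x y y₀
  have hLT : Lᵀ = of fun j => g (ys j) - g y₀ := by ext i j; simp [hL]
  have hL'T : L'ᵀ = of fun j => g' (ys j) - g' y₀ := by ext i j; simp [hL']
  have hf : ∀ x, f x = A *ᵥ f' x := by
    rw [hA, hLT, hL'T]
    exact eq_inv_mul_mulVec_of_dotProduct_eq hpair hdivg
  obtain ⟨hAunit, hdivf'⟩ := isUnit_and_linearIndependent_of_eq_mulVec hf hdivf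
  have hATdet : IsUnit Aᵀ.det := by rwa [det_transpose, ← isUnit_iff_isUnit_det]
  refine ⟨(isUnit_iff_isUnit_det A).mp hAunit, hf, fun y => ?_⟩
  change g y - g y₀ = Aᵀ⁻¹ *ᵥ (g' y - g' y₀)
  rw [← transpose_mulVec_eq_of_dotProduct_eq hpair hf hdivf' y, mulVec_mulVec,
    nonsing_inv_mul _ hATdet, one_mulVec]
end

section
/- In the setting of the previous statement, for any label y_j ≠ ŷ (where ŷ is the strict angular argmax with positive cosine similarity), ρ · p_{f,g}(y_j|x) → 0 as ρ → ∞. -/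
open RealInnerProductSpace

/-- Softmax probability for a single embedding over a finite label set,
with unembeddings in Euclidean space. -/
noncomputable def psm {Y : Type*} [Fintype Y] {M : ℕ}
    (f : EuclideanSpace ℝ (Fin M)) (g : Y → EuclideanSpace ℝ (Fin M)) (y : Y) : ℝ :=
  Real.exp ⟪f, g y⟫ / ∑ y' : Y, Real.exp ⟪f, g y'⟫


set_option maxHeartbeats 1000000 in
/-- For any non-argmax label `y_j`, `ρ · p(y_j|x) → 0` as `ρ → ∞`. -/
theorem softmax_nonargmax_rho_tendsto_zero {Y : Type*} [Fintype Y] {M : ℕ}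
    (f : EuclideanSpace ℝ (Fin M)) (u : Y → EuclideanSpace ℝ (Fin M))
    (c : ℝ) (hc : 0 < c) (hf : ‖f‖ = c) (hu : ∀ y, ‖u y‖ = 1)
    (yhat : Y) (hpos : 0 < ⟪f, u yhat⟫)
    (hmax : ∀ y, y ≠ yhat → ⟪f, u y⟫ < ⟪f, u yhat⟫)
    (yj : Y) (hj : yj ≠ yhat) :
    Filter.Tendsto (fun ρ : ℝ => ρ * psm f (fun y => ρ • u y) yj)
      Filter.atTop (nhds 0) := by
  set a := ⟪f, u yhat⟫ with ha
  set b := ⟪f, u yj⟫ with hb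
  have hε : 0 < a - b := sub_pos.mpr (hmax yj hj)
  have h1 : Filter.Tendsto (fun x : ℝ => x * Real.exp (-x)) Filter.atTop (nhds 0) := by
    simpa using Real.tendsto_pow_mul_exp_neg_atTop_nhds_zero 1
  have h2 : Filter.Tendsto (fun ρ : ℝ => (a - b) * ρ) Filter.atTop Filter.atTop :=
    Filter.Tendsto.const_mul_atTop hε Filter.tendsto_id
  have h3 : Filter.Tendsto (fun ρ : ℝ => ((a - b) * ρ) * Real.exp (-((a - b) * ρ)))
      Filter.atTop (nhds 0) := h1.comp h2
  have h4 : Filter.Tendsto (fun ρ : ℝ => ρ * Real.exp (-((a - b) * ρ)))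
      Filter.atTop (nhds 0) := by
    have h5 := h3.const_mul (1 / (a - b))
    simp only [mul_zero] at h5
    refine h5.congr (fun ρ => ?_)
    field_simp
  apply squeeze_zero' ?_ ?_ h4
  · filter_upwards [Filter.eventually_ge_atTop (0 : ℝ)] with ρ hρ
    refine mul_nonneg hρ ?_
    unfold psm
    exact div_nonneg (Real.exp_nonneg _)
      (Finset.sum_nonneg fun y _ => Real.exp_nonneg _)
  · filter_upwards [Filter.eventually_ge_atTop (0 : ℝ)] with ρ hρ
    unfold psm
    simp only [real_inner_smul_right]
    have hS : Real.exp (ρ * a) ≤ ∑ y', Real.exp (ρ * ⟪f, u y'⟫) :=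
      Finset.single_le_sum (f := fun y => Real.exp (ρ * ⟪f, u y⟫))
        (fun y _ => (Real.exp_pos _).le) (Finset.mem_univ yhat)
    have hdiv : Real.exp (ρ * b) / ∑ y', Real.exp (ρ * ⟪f, u y'⟫)
        ≤ Real.exp (ρ * b) / Real.exp (ρ * a) :=
      div_le_div_of_nonneg_left (Real.exp_nonneg _) (Real.exp_pos _) hS
    have := mul_le_mul_of_nonneg_left hdiv hρ
    refine this.trans_eq ?_
    rw [← Real.exp_sub]; ring_nf
end

section
/- Exact recovery under zero error: with f(x) = Ã f'(x) + h(x) where Ã = L^{-T} S^{-1} S' L'^{T} and h(x) = L^{-T} S^{-1} ε(x) as in the weighted decomposition lemma, if the two models' conditional distributions are equal (p_{f,g} = p_{f',g'} pointwise), then ε(x) = 0 for all x, S = S', and f(x) = L^{-T} L'^{T} f'(x), recovering the linear identifiability relation. -/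
/-!
Equal conditionals have equal log-odds against the pivot label `y₀`, so the two standardizing
scales (functions of those log-odds) agree and the standardized differences `ε` vanish. The
log-odds of `ys j` are linear in the embedding, `log p(ys j|x) - log p(y₀|x) = (Lᵀ f(x))_j`,
so `Lᵀ f(x) = L'ᵀ f'(x)`, and inverting `Lᵀ` gives the linear relation.
-/

open MeasureTheory ProbabilityTheory Matrix

section Softmax

variable {X Y : Type*} [Fintype Y] {M : ℕ} (f : X → Fin M → ℝ) (g : Y → Fin M → ℝ)

lemma log_softmax_sub_log_softmax (x : X) (y y₀ : Y) :
    Real.log (softmax f g x y) - Real.log (softmax f g x y₀) =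
      ∑ i, f x i * (g y i - g y₀ i) := by
  have hZ : 0 < ∑ y' : Y, Real.exp (∑ i, f x i * g y' i) :=
    Finset.sum_pos (fun _ _ => Real.exp_pos _) ⟨y₀, Finset.mem_univ _⟩
  simp only [softmax, Real.log_div (Real.exp_ne_zero _) hZ.ne', Real.log_exp, mul_sub,
    Finset.sum_sub_distrib]
  ring

lemma transpose_mulVec_eq_log_softmax_sub {y₀ : Y} {ys : Fin M → Y}
    {L : Matrix (Fin M) (Fin M) ℝ} (hL : ∀ i j, L i j = g (ys j) i - g y₀ i) (x : X) :
    Lᵀ *ᵥ f x = fun j => Real.log (softmax f g x (ys j)) - Real.log (softmax f g x y₀) := by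
  ext j
  simp only [mulVec, dotProduct, transpose_apply, hL, log_softmax_sub_log_softmax, mul_comm]

end Softmax

lemma Matrix.eq_nonsing_inv_mul_mulVec_of_mulVec_eq {n α : Type*} [Fintype n] [DecidableEq n]
    [CommRing α] {A B : Matrix n n α} (hA : IsUnit A.det) {v w : n → α} (h : A *ᵥ v = B *ᵥ w) :
    v = (A⁻¹ * B) *ᵥ w := by
  rw [← mulVec_mulVec, ← h, mulVec_mulVec, nonsing_inv_mul _ hA, one_mulVec]

theorem exact_recovery_under_zero_error_general
    {X Y : Type*} [MeasurableSpace X] (μ : Measure X)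
    [Fintype Y] {M : ℕ}
    (f f' : X → Fin M → ℝ) (g g' : Y → Fin M → ℝ)
    (y₀ : Y) (ys : Fin M → Y)
    (L L' : Matrix (Fin M) (Fin M) ℝ)
    (hL : ∀ i j, L i j = g (ys j) i - g y₀ i)
    (hL' : ∀ i j, L' i j = g' (ys j) i - g' y₀ i)
    (hLdet : IsUnit L.det)
    (ψ ψ' : Fin M → ℝ)
    (hψ : ∀ i, ψ i = Real.sqrt (variance
      (fun x => Real.log (softmax f g x (ys i)) - Real.log (softmax f g x y₀)) μ))
    (hψ' : ∀ i, ψ' i = Real.sqrt (variance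
      (fun x => Real.log (softmax f' g' x (ys i)) - Real.log (softmax f' g' x y₀)) μ))
    (ε : X → Fin M → ℝ)
    (hε : ∀ x i, ε x i =
      (Real.log (softmax f g x (ys i)) - Real.log (softmax f g x y₀)) / ψ i -
      (Real.log (softmax f' g' x (ys i)) - Real.log (softmax f' g' x y₀)) / ψ' i)
    (heq : ∀ x y, softmax f g x y = softmax f' g' x y) :
    (∀ x i, ε x i = 0) ∧ (∀ i, ψ i = ψ' i) ∧
    (∀ x, f x = ((Lᵀ)⁻¹ * L'ᵀ).mulVec (f' x)) := by
  have hψeq : ∀ i, ψ i = ψ' i := fun i => by simp only [hψ, hψ', heq]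
  refine ⟨fun x i => by rw [hε, heq, heq, hψeq, sub_self], hψeq, fun x => ?_⟩
  have hLT : IsUnit Lᵀ.det := by rwa [det_transpose]
  refine eq_nonsing_inv_mul_mulVec_of_mulVec_eq hLT ?_
  rw [transpose_mulVec_eq_log_softmax_sub f g hL, transpose_mulVec_eq_log_softmax_sub f' g' hL']
  simp only [heq]

/-- Exact recovery under zero error: if the two models' conditional
distributions are equal, then `ε = 0`, `S = S'`, and the linear
identifiability relation `f(x) = L⁻ᵀ L'ᵀ f'(x)` holds. -/
theorem exact_recovery_under_zero_error
    {X Y : Type*} [MeasurableSpace X] (μ : Measure X) [IsProbabilityMeasure μ]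
    [Fintype Y] {M : ℕ}
    (f f' : X → Fin M → ℝ) (g g' : Y → Fin M → ℝ)
    (y₀ : Y) (ys : Fin M → Y)
    (L L' : Matrix (Fin M) (Fin M) ℝ)
    (hL : ∀ i j, L i j = g (ys j) i - g y₀ i)
    (hL' : ∀ i j, L' i j = g' (ys j) i - g' y₀ i)
    (hLdet : IsUnit L.det) (hL'det : IsUnit L'.det)
    (ψ ψ' : Fin M → ℝ)
    (hψ : ∀ i, ψ i = Real.sqrt (variance
      (fun x => Real.log (softmax f g x (ys i)) - Real.log (softmax f g x y₀)) μ))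
    (hψ' : ∀ i, ψ' i = Real.sqrt (variance
      (fun x => Real.log (softmax f' g' x (ys i)) - Real.log (softmax f' g' x y₀)) μ))
    (hψpos : ∀ i, 0 < ψ i) (hψ'pos : ∀ i, 0 < ψ' i)
    (ε : X → Fin M → ℝ)
    (hε : ∀ x i, ε x i =
      (Real.log (softmax f g x (ys i)) - Real.log (softmax f g x y₀)) / ψ i -
      (Real.log (softmax f' g' x (ys i)) - Real.log (softmax f' g' x y₀)) / ψ' i)
    (heq : ∀ x y, softmax f g x y = softmax f' g' x y) :
    (∀ x i, ε x i = 0) ∧ (∀ i, ψ i = ψ' i) ∧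
    (∀ x, f x = ((Lᵀ)⁻¹ * L'ᵀ).mulVec (f' x)) :=
  exact_recovery_under_zero_error_general μ f f' g g' y₀ ys L L' hL hL' hLdet ψ ψ' hψ hψ' ε hε heq
end

section
/- Decomposition of embeddings via log-likelihood ratios: let (f, g) and (f', g') be softmax models both satisfying the diversity condition, with L, L' the invertible matrices of displaced unembeddings and S, S' the diagonal matrices with entries 1/ψ_x(y_i; p) (assumed positive and finite). Then f(x) = Ã f'(x) + L^{-T} S^{-1} ε(x), where Ã = L^{-T} S^{-1} S' L'^{T} and the i-th entry of ε(x) is (log p_{f,g}(y_i|x) - log p_{f,g}(y₀|x))/ψ_x(y_i; p_{f,g}) - (log p_{f',g'}(y_i|x) - log p_{f',g'}(y₀|x))/ψ_x(y_i; p_{f',g'}). -/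
open MeasureTheory ProbabilityTheory Matrix

lemma log_softmax_sub {X Y : Type*} [Fintype Y] {M : ℕ}
    (f : X → Fin M → ℝ) (g : Y → Fin M → ℝ) (x : X) (y y₀ : Y) :
    Real.log (softmax f g x y) - Real.log (softmax f g x y₀)
      = ∑ i, f x i * (g y i - g y₀ i) := by
  have hZ : (0:ℝ) < ∑ y' : Y, Real.exp (∑ i, f x i * g y' i) := by
    have : Nonempty Y := ⟨y⟩
    exact Finset.sum_pos (fun _ _ => Real.exp_pos _) Finset.univ_nonempty
  unfold softmax
  rw [Real.log_div (Real.exp_ne_zero _) hZ.ne', Real.log_div (Real.exp_ne_zero _) hZ.ne',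
    Real.log_exp, Real.log_exp]
  simp [mul_sub, Finset.sum_sub_distrib]

/-- Decomposition of embeddings via weighted log-likelihood ratios:
`f(x) = Ã f'(x) + L⁻ᵀ S⁻¹ ε(x)` with `Ã = L⁻ᵀ S⁻¹ S' L'ᵀ`. -/
theorem embedding_decomposition
    {X Y : Type*} [MeasurableSpace X] (μ : Measure X) [IsProbabilityMeasure μ]
    [Fintype Y] {M : ℕ}
    (f f' : X → Fin M → ℝ) (g g' : Y → Fin M → ℝ)
    (y₀ : Y) (ys : Fin M → Y)
    (L L' : Matrix (Fin M) (Fin M) ℝ)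
    (hL : ∀ i j, L i j = g (ys j) i - g y₀ i)
    (hL' : ∀ i j, L' i j = g' (ys j) i - g' y₀ i)
    (hLdet : IsUnit L.det) (hL'det : IsUnit L'.det)
    (ψ ψ' : Fin M → ℝ)
    (hψ : ∀ i, ψ i = Real.sqrt (variance
      (fun x => Real.log (softmax f g x (ys i)) - Real.log (softmax f g x y₀)) μ))
    (hψ' : ∀ i, ψ' i = Real.sqrt (variance
      (fun x => Real.log (softmax f' g' x (ys i)) - Real.log (softmax f' g' x y₀)) μ))
    (hψpos : ∀ i, 0 < ψ i) (hψ'pos : ∀ i, 0 < ψ' i)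
    (ε : X → Fin M → ℝ)
    (hε : ∀ x i, ε x i =
      (Real.log (softmax f g x (ys i)) - Real.log (softmax f g x y₀)) / ψ i -
      (Real.log (softmax f' g' x (ys i)) - Real.log (softmax f' g' x y₀)) / ψ' i) :
    ∀ x, f x =
      ((Lᵀ)⁻¹ * (Matrix.diagonal fun i => (ψ i)⁻¹)⁻¹ *
          (Matrix.diagonal fun i => (ψ' i)⁻¹) * L'ᵀ).mulVec (f' x) +
      ((Lᵀ)⁻¹ * (Matrix.diagonal fun i => (ψ i)⁻¹)⁻¹).mulVec (ε x) := by
  intro x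
  have hψne : ∀ i, ψ i ≠ 0 := fun i => (hψpos i).ne'
  have hψ'ne : ∀ i, ψ' i ≠ 0 := fun i => (hψ'pos i).ne'
  -- diagonal inverse
  have hdiaginv : (Matrix.diagonal fun i => (ψ i)⁻¹)⁻¹ = Matrix.diagonal ψ := by
    apply Matrix.inv_eq_right_inv
    rw [Matrix.diagonal_mul_diagonal]
    have h1 : (fun i => (ψ i)⁻¹ * ψ i) = fun _ => 1 :=
      funext fun i => inv_mul_cancel₀ (hψne i)
    rw [h1, Matrix.diagonal_one]
  -- key identities
  have hLmul : ∀ i, (Lᵀ.mulVec (f x)) i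
      = Real.log (softmax f g x (ys i)) - Real.log (softmax f g x y₀) := by
    intro i
    rw [log_softmax_sub]
    simp only [Matrix.mulVec, dotProduct, Matrix.transpose_apply, hL]
    exact Finset.sum_congr rfl fun j _ => mul_comm _ _
  have hL'mul : ∀ i, (L'ᵀ.mulVec (f' x)) i
      = Real.log (softmax f' g' x (ys i)) - Real.log (softmax f' g' x y₀) := by
    intro i
    rw [log_softmax_sub]
    simp only [Matrix.mulVec, dotProduct, Matrix.transpose_apply, hL']
    exact Finset.sum_congr rfl fun j _ => mul_comm _ _
  -- the core algebraic identity
  have hkey : Lᵀ.mulVec (f x)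
      = ((Matrix.diagonal ψ * (Matrix.diagonal fun i => (ψ' i)⁻¹) * L'ᵀ).mulVec (f' x))
        + (Matrix.diagonal ψ).mulVec (ε x) := by
    funext i
    have h1 : ((Matrix.diagonal ψ * (Matrix.diagonal fun i => (ψ' i)⁻¹) * L'ᵀ).mulVec (f' x)) i
        = ψ i * (ψ' i)⁻¹ * (L'ᵀ.mulVec (f' x)) i := by
      simp only [← Matrix.mulVec_mulVec, Matrix.mulVec_diagonal, mul_assoc]
    have h2 : ((Matrix.diagonal ψ).mulVec (ε x)) i = ψ i * ε x i := by
      simp [Matrix.mulVec_diagonal]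
    simp only [Pi.add_apply, h1, h2, hε, hLmul i, hL'mul i]
    rw [← hL'mul i]
    field_simp [hψne i, hψ'ne i]
    ring
  have hLTdet : IsUnit Lᵀ.det := by rwa [Matrix.det_transpose]
  calc f x = (Lᵀ)⁻¹.mulVec (Lᵀ.mulVec (f x)) := by
        rw [Matrix.mulVec_mulVec, Matrix.nonsing_inv_mul _ hLTdet, Matrix.one_mulVec]
    _ = _ := by
        rw [hkey, Matrix.mulVec_add, hdiaginv]
        simp only [← Matrix.mulVec_mulVec, Matrix.mul_assoc]
end
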